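/- arXiv:2010.11644 — 3 statements merged into one kernel-verified Lean document; each statement's English description precedes it below -/
import Mathlib

section
/- Let F: ℝ → [0,1] be a CDF satisfying F(V - log T) = F(V)^T for all V ∈ ℝ and all positive integers T, with F(0) = e^{-α} for some α > 0. Then F(ε) = exp(-α e^{-ε}) for all ε ∈ ℝ, i.e., F is a Gumbel CDF. -/
open Filter Set Real

/-- A CDF satisfying F(V - log T) = F(V)^T for all reals V and positive integers T,
with F(0) = e^{-α}, α > 0, must be the Gumbel CDF F(ε) = exp(-α e^{-ε}). -/
theorem cdf_functional_eq_gumbel (F : ℝ → ℝ) (α : ℝ) (hα : 0 < α)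
    (hmono : Monotone F)
    (h01 : ∀ x, F x ∈ Set.Icc (0 : ℝ) 1)
    (hrc : ∀ x, ContinuousWithinAt F (Set.Ici x) x)
    (hbot : Tendsto F atBot (nhds 0))
    (htop : Tendsto F atTop (nhds 1))
    (hfe : ∀ (V : ℝ) (T : ℕ), 1 ≤ T → F (V - Real.log T) = F V ^ T)
    (hF0 : F 0 = Real.exp (-α)) :
    ∀ ε : ℝ, F ε = Real.exp (-α * Real.exp (-ε)) := by
  -- F is positive everywhere
  have hpos : ∀ x : ℝ, 0 < F x := by
    intro x
    set T : ℕ := ⌈Real.exp (-x)⌉₊ + 1 with hT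
    have hT1 : 1 ≤ T := Nat.le_add_left 1 _
    have hTge : Real.exp (-x) ≤ (T : ℝ) := by
      have := Nat.le_ceil (Real.exp (-x))
      rw [hT]
      push_cast
      linarith
    have hxT : 0 ≤ x + Real.log T := by
      have hTpos : (0 : ℝ) < T := lt_of_lt_of_le (Real.exp_pos _) hTge
      have := Real.log_le_log (Real.exp_pos (-x)) hTge
      rw [Real.log_exp] at this
      linarith
    have h1 : F x = F (x + Real.log T) ^ T := by
      have := hfe (x + Real.log T) T hT1
      simpa using this
    have h2 : 0 < F (x + Real.log T) := by
      have := hmono hxT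
      rw [hF0] at this
      exact lt_of_lt_of_le (Real.exp_pos _) this
    rw [h1]
    positivity
  -- F at log of positive naturals
  have hFn : ∀ n : ℕ, 1 ≤ n → F (Real.log n) = Real.exp (-(α / n)) := by
    intro n hn
    have h := hfe (Real.log n) n hn
    rw [sub_self, hF0] at h
    have hlog : (n : ℝ) * Real.log (F (Real.log n)) = -α := by
      have := congrArg Real.log h
      rw [Real.log_exp, Real.log_pow] at this
      push_cast at this ⊢
      linarith
    have hnpos : (0 : ℝ) < n := by exact_mod_cast hn
    have : Real.log (F (Real.log n)) = -(α / n) := by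
      field_simp at hlog ⊢
      linarith
    calc F (Real.log n) = Real.exp (Real.log (F (Real.log n))) :=
          (Real.exp_log (hpos _)).symm
      _ = Real.exp (-(α / n)) := by rw [this]
  -- F at log of positive rationals
  have hFq : ∀ q : ℚ, 0 < q → F (Real.log q) = Real.exp (-(α / q)) := by
    intro q hq
    set m : ℕ := q.num.toNat with hm
    set n : ℕ := q.den with hn
    have hm1 : 1 ≤ m := by
      have : 0 < q.num := Rat.num_pos.mpr hq
      omega
    have hn1 : 1 ≤ n := q.pos
    have hqcast : (q : ℝ) = (m : ℝ) / (n : ℝ) := by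
      rw [hm, hn]
      rw [Rat.cast_def]
      congr 1
      have : 0 < q.num := Rat.num_pos.mpr hq
      exact_mod_cast (Int.toNat_of_nonneg this.le).symm
    have hmpos : (0 : ℝ) < m := by exact_mod_cast hm1
    have hnpos : (0 : ℝ) < n := by exact_mod_cast hn1
    have hlogq : Real.log q = Real.log m - Real.log n := by
      rw [hqcast, Real.log_div hmpos.ne' hnpos.ne']
    have h := hfe (Real.log m) n hn1
    rw [← hlogq] at h
    rw [h, hFn m hm1, ← Real.exp_nat_mul]
    congr 1
    rw [hqcast]
    field_simp
  -- Squeeze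
  intro ε
  have hcont : ContinuousAt (fun x : ℝ => Real.exp (-(α / x))) (Real.exp ε) := by
    have h1 : ContinuousAt (fun x : ℝ => -(α / x)) (Real.exp ε) := by
      apply ContinuousAt.neg
      exact (continuousAt_const.div continuousAt_id (Real.exp_pos ε).ne')
    exact (Real.continuous_exp.continuousAt).comp h1
  have hval : Real.exp (-(α / Real.exp ε)) = Real.exp (-α * Real.exp (-ε)) := by
    congr 1
    rw [Real.exp_neg]
    ring
  rw [Metric.continuousAt_iff] at hcont
  apply le_antisymm
  · -- F ε ≤ target
    apply le_of_forall_pos_le_add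
    intro δ hδ
    obtain ⟨η, hη, hball⟩ := hcont δ hδ
    obtain ⟨q, hq1, hq2⟩ := exists_rat_btwn (lt_add_of_pos_right (Real.exp ε) hη)
    have hq0 : (0 : ℚ) < q := by
      have := (Real.exp_pos ε).trans hq1
      exact_mod_cast this
    have hd : dist ((q : ℝ)) (Real.exp ε) < η := by
      rw [Real.dist_eq, abs_of_pos (by linarith)]
      linarith
    have hb := hball hd
    rw [Real.dist_eq] at hb
    have hFεq : F ε ≤ F (Real.log q) := by
      apply hmono
      rw [← Real.log_exp ε]
      exact Real.log_le_log (Real.exp_pos ε) hq1.le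
    rw [hFq q hq0] at hFεq
    have : Real.exp (-(α / q)) ≤ Real.exp (-(α / Real.exp ε)) + δ := by
      have := abs_lt.mp hb
      linarith [this.2]
    rw [hval] at this
    linarith
  · -- target ≤ F ε
    apply le_of_forall_pos_le_add
    intro δ hδ
    obtain ⟨η, hη, hball⟩ := hcont δ hδ
    have hlo : max (Real.exp ε - η) (Real.exp ε / 2) < Real.exp ε := by
      apply max_lt <;> [linarith; linarith [Real.exp_pos ε]]
    obtain ⟨q, hq1, hq2⟩ := exists_rat_btwn hlo
    have hq0 : (0 : ℚ) < q := by
      have h2 : Real.exp ε / 2 ≤ max (Real.exp ε - η) (Real.exp ε / 2) := le_max_right _ _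
      have : (0 : ℝ) < q := lt_of_lt_of_le (by linarith [Real.exp_pos ε]) (le_of_lt hq1)
      exact_mod_cast this
    have hd : dist ((q : ℝ)) (Real.exp ε) < η := by
      rw [Real.dist_eq, abs_of_neg (by linarith)]
      have h1 : Real.exp ε - η ≤ max (Real.exp ε - η) (Real.exp ε / 2) := le_max_left _ _
      linarith
    have hb := hball hd
    rw [Real.dist_eq] at hb
    have hFεq : F (Real.log q) ≤ F ε := by
      apply hmono
      rw [← Real.log_exp ε]
      exact Real.log_le_log (by exact_mod_cast hq0) hq2.le
    rw [hFq q hq0] at hFεq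
    have : Real.exp (-(α / Real.exp ε)) ≤ Real.exp (-(α / q)) + δ := by
      have := abs_lt.mp hb
      linarith [this.1]
    rw [hval] at this
    linarith
end

section
/- Suppose the functional equation F(V)^T = ∫ F(ε + V - log T) dF(ε) holds where F has the transition-complete property: for any measurable h, if E[h(ε + a)] = 0 for all a then h ≡ 0. If additionally the choice probabilities take softmax form, then F(log(T/L)) = F(-log L)^{1/T} for all positive integers T, L. -/
open MeasureTheory Real

/-- If F is the CDF of a transition-complete distribution μ and the softmax choice
probabilities give F(V)^T = ∫ F(ε + V - log T) dμ(ε) for all V and positive integers T,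
then F(log(T/L)) = F(-log L)^{1/T} for all positive integers T, L. -/
theorem mcfadden_functional_relation
    (μ : Measure ℝ) [IsProbabilityMeasure μ]
    (F : ℝ → ℝ) (hF : ∀ x, F x = (μ (Set.Iic x)).toReal)
    (htc : ∀ h : ℝ → ℝ, Measurable h →
      (∀ a : ℝ, ∫ ε, h (ε + a) ∂μ = 0) → ∀ x, h x = 0)
    (hfe : ∀ (V : ℝ) (T : ℕ), 1 ≤ T →
      F V ^ T = ∫ ε, F (ε + V - Real.log T) ∂μ) :
    ∀ (T L : ℕ), 1 ≤ T → 1 ≤ L →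
      F (Real.log ((T : ℝ) / L)) = F (-Real.log L) ^ ((1 : ℝ) / T) := by
  intro T L hT hL
  have hT0 : (T : ℝ) ≠ 0 := by positivity
  have hL0 : (L : ℝ) ≠ 0 := by positivity
  have key : F (Real.log ((T : ℝ) / L)) ^ T = F (-Real.log L) := by
    have h1 := hfe (Real.log ((T : ℝ) / L)) T hT
    have h2 := hfe (-Real.log L) 1 le_rfl
    simp only [pow_one, Nat.cast_one, Real.log_one, sub_zero] at h2
    rw [h1, h2]
    congr 1
    ext ε
    rw [Real.log_div hT0 hL0]
    ring_nf
  have hnn : 0 ≤ F (Real.log ((T : ℝ) / L)) := by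
    rw [hF]; exact ENNReal.toReal_nonneg
  rw [← key, ← Real.rpow_natCast _ T, ← Real.rpow_mul hnn,
    mul_one_div, div_self hT0, Real.rpow_one]
end

section
/- The Prelec weighting function π(p) = exp(-(-ln p)^α) has a unique fixed point at p = 1/e for every α > 0, α ≠ 1; it overweights probabilities below 1/e (π(p) > p for p < 1/e) and underweights those above 1/e (π(p) < p for 1/e < p < 1) when 0 < α < 1. -/
open Set Real

/-- The Prelec weighting function π(p) = exp(-(-ln p)^α) has a unique fixed point at
p = 1/e for α > 0, α ≠ 1; for 0 < α < 1 it overweights probabilities below 1/e and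
underweights probabilities above 1/e. -/
theorem prelec_fixed_point (α : ℝ) (hα0 : 0 < α) :
    (α ≠ 1 →
      Real.exp (-(-Real.log (Real.exp (-1))) ^ α) = Real.exp (-1)
        ∧ ∀ p ∈ Set.Ioo (0 : ℝ) 1,
            Real.exp (-(-Real.log p) ^ α) = p → p = Real.exp (-1))
      ∧ (α < 1 →
          (∀ p ∈ Set.Ioo (0 : ℝ) (Real.exp (-1)), p < Real.exp (-(-Real.log p) ^ α))
            ∧ ∀ p ∈ Set.Ioo (Real.exp (-1)) 1,
                Real.exp (-(-Real.log p) ^ α) < p) := by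
  constructor
  · intro hα1
    constructor
    · rw [Real.log_exp]
      norm_num
    · rintro p ⟨hp0, hp1⟩ hfix
      set t : ℝ := -Real.log p with ht
      have ht0 : 0 < t := by
        have := Real.log_neg hp0 hp1
        linarith
      -- from the fixed point equation: t ^ α = t
      have hkey : t ^ α = t := by
        have := congrArg Real.log hfix
        rw [Real.log_exp] at this
        linarith [ht, this]
      have ht1 : t = 1 := by
        by_contra hne
        have hlog : Real.log t ≠ 0 := Real.log_ne_zero_of_pos_of_ne_one ht0 hne
        have : α * Real.log t = Real.log t := by
          have := congrArg Real.log hkey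
          rwa [Real.log_rpow ht0] at this
        exact hα1 (mul_right_cancel₀ hlog (by rw [one_mul]; exact this))
      have : Real.log p = -1 := by
        have : -Real.log p = 1 := ht1
        linarith
      calc p = Real.exp (Real.log p) := (Real.exp_log hp0).symm
        _ = Real.exp (-1) := by rw [this]
  · intro hα1
    constructor
    · rintro p ⟨hp0, hpe⟩
      set t : ℝ := -Real.log p with ht
      have htgt : 1 < t := by
        have := Real.log_lt_log hp0 hpe
        rw [Real.log_exp] at this
        simp only [ht]; linarith
      have h1 : t ^ α < t := by
        have := Real.rpow_lt_rpow_of_exponent_lt htgt hα1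
        rwa [Real.rpow_one] at this
      have : Real.log p < -t ^ α := by simp only [ht] at h1 ⊢; linarith
      calc p = Real.exp (Real.log p) := (Real.exp_log hp0).symm
        _ < Real.exp (-t ^ α) := Real.exp_lt_exp.mpr this
    · rintro p ⟨hpe, hp1⟩
      have hp0 : 0 < p := lt_trans (Real.exp_pos _) hpe
      set t : ℝ := -Real.log p with ht
      have ht0 : 0 < t := by
        have := Real.log_neg hp0 hp1
        simp only [ht]; linarith
      have htlt : t < 1 := by
        have := Real.log_lt_log (Real.exp_pos _) hpe
        rw [Real.log_exp] at this
        simp only [ht]; linarith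
      have h1 : t < t ^ α := by
        have := Real.rpow_lt_rpow_of_exponent_gt ht0 htlt hα1
        rwa [Real.rpow_one] at this
      have : -t ^ α < Real.log p := by simp only [ht] at h1 ⊢; linarith
      calc Real.exp (-t ^ α) < Real.exp (Real.log p) := Real.exp_lt_exp.mpr this
        _ = p := Real.exp_log hp0
end
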